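/- Let m > 0 and let x, y ∈ ℝ² with x ≠ y. Then the massive Green function admits the two equal representations: ∫₀^∞ exp(−m²s/2 − ‖x−y‖²/(2s)) ds/(2s) = ∫₁^∞ k_m(s(x−y))/s ds, where both integrals are taken in the Lebesgue sense. -/

import Mathlib

/-!
With `A = m² ‖x - y‖²`, both sides equal the double integral of
`(s / 2) exp (-A / (2u) - s² u / 2)` over `s > 1`, `u > 0`. Integrating out `s` is a Gaussian tail
and gives the left side after the substitution `u = m² s`; integrating out `u` gives
`k_m(s (x - y)) / s` after the substitution `t = s² u`. Working with lower Lebesgue integrals,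
Tonelli swaps the two orders with no integrability conditions.
-/

open MeasureTheory Real Set Filter
open scoped ENNReal

/-- `km m z = (1/2) ∫₀^∞ exp(−m²‖z‖²/(2s) − s/2) ds`. -/
noncomputable def km (m : ℝ) (z : EuclideanSpace ℝ (Fin 2)) : ℝ :=
  (1 / 2) * ∫ s in Set.Ioi (0 : ℝ), Real.exp (-(m ^ 2 * ‖z‖ ^ 2) / (2 * s) - s / 2)

theorem lintegral_Ioi_zero_eq_lintegral_comp_mul (g : ℝ → ℝ≥0∞) {c : ℝ} (hc : 0 < c) :
    ∫⁻ x in Ioi 0, g x = ∫⁻ x in Ioi 0, ENNReal.ofReal c * g (c * x) := by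
  have himage : (c * ·) '' Ioi (0 : ℝ) = Ioi 0 := by
    rw [image_mul_left_Ioi hc, mul_zero]
  simpa only [himage, abs_of_pos hc] using lintegral_image_eq_lintegral_abs_deriv_mul
    (measurableSet_Ioi (a := 0)) (fun x _ ↦ (hasDerivAt_const_mul c).hasDerivWithinAt)
    (mul_right_injective₀ hc.ne').injOn g

theorem integral_Ioi_mul_exp_neg_mul_sq {b : ℝ} (hb : 0 < b) (a : ℝ) :
    ∫ s in Ioi a, s * exp (-b * s ^ 2) = exp (-b * a ^ 2) / (2 * b) := by
  have hderiv (s : ℝ) (_ : s ∈ Ioi a) :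
      HasDerivAt (fun s ↦ -exp (-b * s ^ 2) / (2 * b)) (s * exp (-b * s ^ 2)) s := by
    refine (((hasDerivAt_pow 2 s).const_mul (-b)).exp.neg.div_const (2 * b)).congr_deriv ?_
    field_simp
    ring
  have hlim : Tendsto (fun s ↦ -exp (-b * s ^ 2) / (2 * b)) atTop (nhds 0) := by
    have := ((tendsto_exp_atBot.comp ((tendsto_pow_atTop two_ne_zero).const_mul_atTop_of_neg
      (neg_neg_of_pos hb))).neg.div_const (2 * b))
    simpa using this
  rw [integral_Ioi_of_hasDerivAt_of_tendsto (by fun_prop) hderiv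
    (integrable_mul_exp_neg_mul_sq hb).integrableOn hlim]
  ring

theorem integrableOn_exp_neg_div_sub_half {A : ℝ} (hA : 0 ≤ A) :
    IntegrableOn (fun t ↦ exp (-A / (2 * t) - t / 2)) (Ioi 0) := by
  refine (exp_neg_integrableOn_Ioi 0 (by norm_num : (0 : ℝ) < 1 / 2)).mono' (by fun_prop) ?_
  filter_upwards [ae_restrict_mem measurableSet_Ioi] with t (ht : 0 < t)
  rw [norm_of_nonneg (exp_pos _).le, exp_le_exp]
  have : 0 ≤ A / (2 * t) := by positivity
  linarith [neg_div (2 * t) A]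

theorem lintegral_Ioi_one_ofReal_half_mul_exp {u : ℝ} (hu : 0 < u) (A : ℝ) :
    ∫⁻ s in Ioi 1, ENNReal.ofReal (s / 2 * exp (-A / (2 * u) - s ^ 2 * u / 2))
      = ENNReal.ofReal (exp (-u / 2 - A / (2 * u)) / (2 * u)) := by
  have hsplit (s : ℝ) : s / 2 * exp (-A / (2 * u) - s ^ 2 * u / 2)
      = exp (-A / (2 * u)) / 2 * (s * exp (-(u / 2) * s ^ 2)) := by
    rw [show -A / (2 * u) - s ^ 2 * u / 2 = -A / (2 * u) + -(u / 2) * s ^ 2 by ring, exp_add]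
    ring
  have hint : IntegrableOn (fun s ↦ s / 2 * exp (-A / (2 * u) - s ^ 2 * u / 2)) (Ioi 1) := by
    simpa only [hsplit] using
      ((integrable_mul_exp_neg_mul_sq (half_pos hu)).const_mul _).integrableOn
  have hnonneg : 0 ≤ᵐ[volume.restrict (Ioi 1)]
      fun s ↦ s / 2 * exp (-A / (2 * u) - s ^ 2 * u / 2) := by
    filter_upwards [ae_restrict_mem measurableSet_Ioi] with s (hs : 1 < s)
    have : 0 ≤ s := by linarith
    positivity
  rw [← ofReal_integral_eq_lintegral_ofReal hint hnonneg]
  simp only [hsplit, integral_const_mul, integral_Ioi_mul_exp_neg_mul_sq (half_pos hu)]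
  congr 1
  rw [sub_eq_add_neg, add_comm, exp_add]
  field_simp

theorem ofReal_half_integral_div_eq_lintegral {A s : ℝ} (hA : 0 ≤ A) (hs : 0 < s) :
    ENNReal.ofReal (1 / 2 * (∫ t in Ioi 0, exp (-(s ^ 2 * A) / (2 * t) - t / 2)) / s)
      = ∫⁻ u in Ioi 0, ENNReal.ofReal (s / 2 * exp (-A / (2 * u) - s ^ 2 * u / 2)) := by
  have hs2 : 0 < s ^ 2 := by positivity
  have hnonneg : 0 ≤ᵐ[volume.restrict (Ioi 0)] fun t ↦ exp (-(s ^ 2 * A) / (2 * t) - t / 2) :=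
    ae_of_all _ fun t ↦ (exp_pos _).le
  calc _ = ENNReal.ofReal (1 / (2 * s)) *
        ENNReal.ofReal (∫ t in Ioi 0, exp (-(s ^ 2 * A) / (2 * t) - t / 2)) := by
        rw [← ENNReal.ofReal_mul (by positivity)]
        ring_nf
    _ = ENNReal.ofReal (1 / (2 * s)) * ∫⁻ u in Ioi 0,
          ENNReal.ofReal (s ^ 2) * ENNReal.ofReal (exp (-A / (2 * u) - s ^ 2 * u / 2)) := by
        rw [ofReal_integral_eq_lintegral_ofReal (integrableOn_exp_neg_div_sub_half (by positivity))
          hnonneg, lintegral_Ioi_zero_eq_lintegral_comp_mul _ hs2]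
        refine congrArg _ (setLIntegral_congr_fun measurableSet_Ioi fun u (hu : 0 < u) ↦ ?_)
        field_simp
    _ = _ := by
        rw [← lintegral_const_mul' _ _ ENNReal.ofReal_ne_top]
        refine lintegral_congr fun u ↦ ?_
        rw [← ENNReal.ofReal_mul hs2.le, ← ENNReal.ofReal_mul (by positivity), ← mul_assoc]
        field_simp

theorem km_smul (m s : ℝ) (z : EuclideanSpace ℝ (Fin 2)) :
    km m (s • z) =
      1 / 2 * ∫ t in Ioi 0, exp (-(s ^ 2 * (m ^ 2 * ‖z‖ ^ 2)) / (2 * t) - t / 2) := by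
  simp only [km, norm_smul, mul_pow, Real.norm_eq_abs, sq_abs, mul_left_comm]

theorem lintegral_Ioi_ofReal_exp_div_rescale {m : ℝ} (hm : m ≠ 0) (r : ℝ) :
    ∫⁻ s in Ioi 0, ENNReal.ofReal (exp (-(m ^ 2 * s) / 2 - r ^ 2 / (2 * s)) / (2 * s))
      = ∫⁻ u in Ioi 0, ENNReal.ofReal (exp (-u / 2 - m ^ 2 * r ^ 2 / (2 * u)) / (2 * u)) := by
  rw [eq_comm, lintegral_Ioi_zero_eq_lintegral_comp_mul _ (by positivity : 0 < m ^ 2)]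
  refine setLIntegral_congr_fun measurableSet_Ioi fun s (hs : 0 < s) ↦ ?_
  rw [← ENNReal.ofReal_mul (sq_nonneg m)]
  field_simp

theorem massive_green_function_two_representations_general
    (m : ℝ) (hm : 0 < m) (x y : EuclideanSpace ℝ (Fin 2)) :
    ∫⁻ s in Set.Ioi (0 : ℝ),
        ENNReal.ofReal (Real.exp (-(m ^ 2 * s) / 2 - ‖x - y‖ ^ 2 / (2 * s)) / (2 * s))
      = ∫⁻ s in Set.Ioi (1 : ℝ), ENNReal.ofReal (km m (s • (x - y)) / s) := by
  set A := m ^ 2 * ‖x - y‖ ^ 2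
  calc _ = ∫⁻ u in Ioi 0, ENNReal.ofReal (exp (-u / 2 - A / (2 * u)) / (2 * u)) :=
        lintegral_Ioi_ofReal_exp_div_rescale hm.ne' _
    _ = ∫⁻ u in Ioi 0, ∫⁻ s in Ioi 1,
          ENNReal.ofReal (s / 2 * exp (-A / (2 * u) - s ^ 2 * u / 2)) :=
        setLIntegral_congr_fun measurableSet_Ioi fun u hu ↦
          (lintegral_Ioi_one_ofReal_half_mul_exp hu A).symm
    _ = ∫⁻ s in Ioi 1, ∫⁻ u in Ioi 0,
          ENNReal.ofReal (s / 2 * exp (-A / (2 * u) - s ^ 2 * u / 2)) :=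
        lintegral_lintegral_swap (by fun_prop)
    _ = _ := setLIntegral_congr_fun measurableSet_Ioi fun s (hs : 1 < s) ↦ by
        rw [km_smul, ofReal_half_integral_div_eq_lintegral (by positivity) (by linarith)]

/-- The two representations of the massive Green function agree off the diagonal:
`∫₀^∞ exp(−m²s/2 − ‖x−y‖²/(2s)) ds/(2s) = ∫₁^∞ k_m(s(x−y))/s ds`. -/
theorem massive_green_function_two_representations
    (m : ℝ) (hm : 0 < m) (x y : EuclideanSpace ℝ (Fin 2)) (hxy : x ≠ y) :
    ∫⁻ s in Set.Ioi (0 : ℝ),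
        ENNReal.ofReal (Real.exp (-(m ^ 2 * s) / 2 - ‖x - y‖ ^ 2 / (2 * s)) / (2 * s))
      = ∫⁻ s in Set.Ioi (1 : ℝ), ENNReal.ofReal (km m (s • (x - y)) / s) :=
  massive_green_function_two_representations_general m hm x y
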